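/- The language L_2lin = { a^{2n} b^{2n} : n ≥ 1 } over the alphabet {a,b} is not accepted by any (non-repetitive) nondeterministic finite automaton with translucent words (NFAwtw). -/

import Mathlib

/-! Repetitive (non)deterministic finite automata with translucent words. -/

/-- Behavior of the automaton at the end-of-tape marker: halt accepting,
halt rejecting, or (in the repetitive case) continue in one of a set of states. -/
inductive EndBehavior (Q : Type) : Type where
  | accept : EndBehavior Q
  | reject : EndBehavior Q
  | cont : Set Q → EndBehavior Q

/-- `InStar S w` means `w` belongs to the Kleene star `S*` of the set of words `S`. -/
def InStar {α : Type} (S : Set (List α)) (w : List α) : Prop :=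
  ∃ l : List (List α), (∀ u ∈ l, u ∈ S) ∧ l.flatten = w

/-- A (repetitive) nondeterministic finite automaton with translucent words,
with state set `Q` over the alphabet `α`.  `tl q` is the set `τ(q)` of
translucent words of the state `q`, `delta` is the transition function and
`endB q` is the behavior at the end-of-tape marker.  The fields `tl_fin`,
`code_ne`, `prefix_code` and `tl_head` express that each `τ(q)` is finite,
that `τ(q) ∪ Σ_q` is a prefix code (no empty word, and no member is a proper
prefix of another member), and that no word of `τ(q)` begins with a letter
readable in `q`. -/
structure RNFAwtw (α : Type) (Q : Type) : Type where
  init : Set Q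
  tl : Q → Set (List α)
  delta : Q → α → Set Q
  endB : Q → EndBehavior Q
  tl_fin : ∀ q, (tl q).Finite
  code_ne : ∀ q, [] ∉ tl q
  prefix_code : ∀ q,
    ∀ u ∈ tl q ∪ {w | ∃ a, (delta q a).Nonempty ∧ w = [a]},
    ∀ v ∈ tl q ∪ {w | ∃ a, (delta q a).Nonempty ∧ w = [a]},
      u <+: v → u = v
  tl_head : ∀ q, ∀ t ∈ tl q, ∀ a, (delta q a).Nonempty → ¬ [a] <+: t

/-- Configurations: a pair of a state and the remaining tape content, or one
of the two halting configurations. -/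
inductive Conf (α Q : Type) : Type where
  | state : Q → List α → Conf α Q
  | accept : Conf α Q
  | reject : Conf α Q

/-- The single-step computation relation of an RNFAwtw. -/
inductive RNFAwtw.Step {α Q : Type} (A : RNFAwtw α Q) :
    Conf α Q → Conf α Q → Prop where
  | read {q q' : Q} {a : α} {u v : List α} :
      InStar (A.tl q) u → q' ∈ A.delta q a →
      RNFAwtw.Step A (Conf.state q (u ++ a :: v)) (Conf.state q' (u ++ v))
  | stuck {q : Q} {a : α} {u v : List α} :
      InStar (A.tl q) u → A.delta q a = ∅ →
      (∀ t ∈ A.tl q, ¬ t <+: (a :: v)) →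
      RNFAwtw.Step A (Conf.state q (u ++ a :: v)) Conf.reject
  | haltAccept {q : Q} {w : List α} :
      InStar (A.tl q) w → A.endB q = EndBehavior.accept →
      RNFAwtw.Step A (Conf.state q w) Conf.accept
  | haltReject {q : Q} {w : List α} :
      InStar (A.tl q) w → A.endB q = EndBehavior.reject →
      RNFAwtw.Step A (Conf.state q w) Conf.reject
  | goOn {q q' : Q} {w : List α} {S : Set Q} :
      InStar (A.tl q) w → A.endB q = EndBehavior.cont S → q' ∈ S →
      RNFAwtw.Step A (Conf.state q w) (Conf.state q' w)

/-- `A` accepts the word `w`. -/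
def RNFAwtw.Accepts {α Q : Type} (A : RNFAwtw α Q) (w : List α) : Prop :=
  ∃ q0 ∈ A.init, Relation.ReflTransGen A.Step (Conf.state q0 w) Conf.accept

/-- The language accepted by `A`. -/
def RNFAwtw.lang {α Q : Type} (A : RNFAwtw α Q) : Set (List α) :=
  { w | A.Accepts w }

/-- `A` is deterministic: one initial state, at most one transition per
state/letter pair, and at the end-of-tape marker the continuation (if any)
is a single state. -/
def RNFAwtw.Deterministic {α Q : Type} (A : RNFAwtw α Q) : Prop :=
  (∃ q0, A.init = {q0}) ∧
  (∀ q a, (A.delta q a).Subsingleton) ∧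
  (∀ q S, A.endB q = EndBehavior.cont S → ∃ q', S = {q'})

/-- `A` is non-repetitive: at the end-of-tape marker it always halts. -/
def RNFAwtw.NonRepetitive {α Q : Type} (A : RNFAwtw α Q) : Prop :=
  ∀ q S, A.endB q ≠ EndBehavior.cont S

/-- `L` is accepted by some repetitive NFAwtw (with a finite state set). -/
def AcceptedByRNFAwtw {α : Type} (L : Set (List α)) : Prop :=
  ∃ (Q : Type) (_ : Finite Q) (A : RNFAwtw α Q), A.lang = L

/-- `L` is accepted by some repetitive DFAwtw. -/
def AcceptedByRDFAwtw {α : Type} (L : Set (List α)) : Prop :=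
  ∃ (Q : Type) (_ : Finite Q) (A : RNFAwtw α Q), A.Deterministic ∧ A.lang = L

/-- `L` is accepted by some (non-repetitive) NFAwtw. -/
def AcceptedByNFAwtw {α : Type} (L : Set (List α)) : Prop :=
  ∃ (Q : Type) (_ : Finite Q) (A : RNFAwtw α Q), A.NonRepetitive ∧ A.lang = L

/-- `L` is accepted by some (non-repetitive) DFAwtw. -/
def AcceptedByDFAwtw {α : Type} (L : Set (List α)) : Prop :=
  ∃ (Q : Type) (_ : Finite Q) (A : RNFAwtw α Q),
    A.NonRepetitive ∧ A.Deterministic ∧ A.lang = L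

/-- The two-letter alphabet `{a, b}`. -/
inductive Letter : Type where
  | a : Letter
  | b : Letter
deriving DecidableEq

instance : Fintype Letter :=
  ⟨{Letter.a, Letter.b}, fun x => by cases x <;> simp⟩

/-- The word `u^m` (the `m`-fold concatenation of `u`). -/
def wpow {α : Type} (u : List α) (m : ℕ) : List α :=
  (List.replicate m u).flatten

/-- `L_2lin = { a^{2n} b^{2n} : n ≥ 1 }`. -/
def L2lin : Set (List Letter) :=
  { w | ∃ n : ℕ, 1 ≤ n ∧
      w = List.replicate (2 * n) Letter.a ++ List.replicate (2 * n) Letter.b }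

/-!
Run the automaton on `a^N b^N` for large `N`. Reading an `a` leaves a tape of the form `a^i b^N`
wherever that `a` sits behind translucent words, so as long as only `a`'s are read the run follows
an ordinary path of `a`-transitions, which can also be taken reading from the front. If the whole
block `a^N` is consumed this way, a long `a`-path can be pumped and `a^(N+d) b^N` is accepted. Any
other accepting run either reads a `b` while an `a` is still on the tape, or halts on a tape made of
translucent words; in both cases a `b` can be moved in front of an `a` (read it first from the
front, resp. permute the translucent factors), and an accepted word leaves `a*b*`.
-/

open List

theorem NFA.exists_replicate_add_mem_accepts {α σ : Type} [Fintype σ] (M : NFA α σ) {x : α}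
    {n : ℕ} (h : replicate n x ∈ M.accepts) (hn : Fintype.card (Set σ) ≤ n) :
    ∃ d, 0 < d ∧ replicate (n + d) x ∈ M.accepts := by
  obtain ⟨u, v, w, huvw, -, hv, hpump⟩ := M.pumping_lemma h (by simpa using hn)
  refine ⟨v.length, length_pos_iff.2 hv, ?_⟩
  have hx : ∀ y ∈ u ++ v ++ w, y = x := fun y hy => eq_of_mem_replicate (huvw ▸ hy)
  have hlen : (u ++ v ++ w).length = n := by rw [← huvw, length_replicate]
  have hpumped : replicate (n + v.length) x = u ++ v ++ v ++ w := by
    rw [eq_comm, eq_replicate_iff]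
    simp only [length_append, mem_append] at hx hlen ⊢
    exact ⟨by omega, fun y hy => hx y (by tauto)⟩
  rw [hpumped]
  refine hpump (Language.mem_mul.2 ⟨u ++ v ++ v, ?_, w, rfl, rfl⟩)
  refine Language.mem_mul.2 ⟨u, rfl, v ++ v, ?_, by simp⟩
  exact Language.mem_kstar.2
    ⟨[v, v], by simp, fun y hy => by obtain rfl | rfl := mem_pair.1 hy <;> rfl⟩

theorem InStar.exists_pair_sublist {α : Type} {S : Set (List α)} {w : List α} {x y : α}
    (hw : InStar S w) (hx : x ∈ w) (hy : y ∈ w) : ∃ w', InStar S w' ∧ [y, x] <+ w' := by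
  obtain ⟨l, hl, rfl⟩ := hw
  obtain ⟨ux, hux, hxux⟩ := mem_flatten.1 hx
  obtain ⟨uy, huy, hyuy⟩ := mem_flatten.1 hy
  refine ⟨uy ++ ux, ⟨[uy, ux], by simp [hl _ hux, hl _ huy], by simp⟩, ?_⟩
  exact (singleton_sublist.2 hyuy).append (singleton_sublist.2 hxux)

theorem List.replicate_succ_append_eq_append_cons {α : Type} {x : α} {v : List α}
    (hxv : x ∉ v) {i : ℕ} {u v' : List α} (h : replicate (i + 1) x ++ v = u ++ x :: v') :
    u ++ v' = replicate i x ++ v := by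
  induction u generalizing i with
  | nil => simpa [replicate_succ] using h.symm
  | cons c u ih =>
    cases i with
    | zero =>
      rw [Nat.zero_add, replicate_one, singleton_append, cons_append, cons.injEq] at h
      exact absurd (h.2 ▸ mem_append_right u mem_cons_self) hxv
    | succ i =>
      rw [replicate_succ, cons_append, cons_append, cons.injEq] at h
      rw [cons_append, ih h.2, ← h.1, replicate_succ, cons_append]

theorem List.not_pair_sublist_replicate_append_replicate {α : Type} {x y z : α} (hyx : y ≠ x)
    (m n : ℕ) : ¬ [y, x] <+ replicate m x ++ replicate n z := by
  intro h
  obtain ⟨_, _, hyx', h₁, h₂⟩ := sublist_append_iff.1 h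
  obtain ⟨k, -, rfl⟩ := sublist_replicate_iff.1 h₁
  obtain ⟨k', -, rfl⟩ := sublist_replicate_iff.1 h₂
  rcases k with _ | k
  · have hz := (eq_replicate_iff.1 (by simpa using hyx')).2
    exact hyx ((hz y (by simp)).trans (hz x (by simp)).symm)
  · exact hyx (cons.inj hyx').1

namespace RNFAwtw

variable {α Q : Type} (A : RNFAwtw α Q)

def AcceptsFrom (q : Q) (w : List α) : Prop :=
  Relation.ReflTransGen A.Step (Conf.state q w) Conf.accept

/-- The automaton with translucency ignored, started in `q` and accepting in `p`: its runs read
the tape strictly from the front. -/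
def frontNFA (q p : Q) : NFA α Q where
  step := A.delta
  start := {q}
  accept := {p}

variable {A}

theorem nil_mem_frontNFA_accepts (q : Q) : [] ∈ (A.frontNFA q q).accepts := by
  simp [NFA.mem_accepts, frontNFA]

theorem cons_mem_frontNFA_accepts {q p : Q} {x : α} {w : List α} :
    x :: w ∈ (A.frontNFA q p).accepts ↔
      ∃ q' ∈ A.delta q x, w ∈ (A.frontNFA q' p).accepts := by
  simp only [frontNFA, NFA.mem_accepts, Set.mem_singleton_iff, NFA.evalFrom_cons,
    NFA.stepSet_singleton, NFA.mem_evalFrom_iff_exists (S := A.delta q x), exists_eq_left]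
  rfl

theorem not_reflTransGen_reject_accept : ¬ Relation.ReflTransGen A.Step .reject .accept := by
  intro h
  rcases h.cases_head with h | ⟨_, h, _⟩ <;> cases h

theorem AcceptsFrom.cases_head (hA : A.NonRepetitive) {q : Q} {w : List α}
    (h : A.AcceptsFrom q w) :
    (∃ u x v, ∃ q' ∈ A.delta q x, w = u ++ x :: v ∧ A.AcceptsFrom q' (u ++ v)) ∨
      (InStar (A.tl q) w ∧ A.endB q = .accept) := by
  rcases Relation.ReflTransGen.cases_head h with h | ⟨_, hstep, hrun⟩
  · cases h
  cases hstep with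
  | read _ hq' => exact .inl ⟨_, _, _, _, hq', rfl, hrun⟩
  | stuck => exact (not_reflTransGen_reject_accept hrun).elim
  | haltAccept hw hend => exact .inr ⟨hw, hend⟩
  | haltReject => exact (not_reflTransGen_reject_accept hrun).elim
  | goOn _ hend => exact (hA _ _ hend).elim

theorem acceptsFrom_cons {q q' : Q} {x : α} {w : List α} (hq' : q' ∈ A.delta q x)
    (hw : A.AcceptsFrom q' w) : A.AcceptsFrom q (x :: w) :=
  .head (by simpa using Step.read (u := []) ⟨[], by simp, rfl⟩ hq') hw

theorem acceptsFrom_of_inStar {q : Q} {w : List α} (hw : InStar (A.tl q) w)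
    (hend : A.endB q = .accept) : A.AcceptsFrom q w :=
  .single (.haltAccept hw hend)

theorem acceptsFrom_append {q p : Q} {u v : List α} (hu : u ∈ (A.frontNFA q p).accepts)
    (hv : A.AcceptsFrom p v) : A.AcceptsFrom q (u ++ v) := by
  induction u generalizing q with
  | nil =>
    obtain rfl : p = q := by simpa [NFA.mem_accepts, frontNFA] using hu
    exact hv
  | cons x u ih =>
    obtain ⟨q', hq', hu⟩ := cons_mem_frontNFA_accepts.1 hu
    exact acceptsFrom_cons hq' (ih hu)

theorem AcceptsFrom.replicate_append (hA : A.NonRepetitive) {x : α} {v : List α} (hv : v ≠ [])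
    (hxv : x ∉ v) {i : ℕ} {q : Q} (h : A.AcceptsFrom q (replicate i x ++ v)) :
    (∃ p, replicate i x ∈ (A.frontNFA q p).accepts ∧ A.AcceptsFrom p v) ∨
      ∃ y ≠ x, ∃ w, [y, x] <+ w ∧ A.AcceptsFrom q w := by
  induction i generalizing q with
  | zero => exact .inl ⟨q, nil_mem_frontNFA_accepts q, h⟩
  | succ i ih =>
    rcases h.cases_head hA with ⟨u, y, v', q', hq', hw, hrun⟩ | ⟨hw, hend⟩
    · by_cases hyx : y = x
      · subst hyx
        rw [replicate_succ_append_eq_append_cons hxv hw] at hrun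
        rcases ih hrun with ⟨p, hp, hpv⟩ | ⟨z, hzy, w, hzw, hacc⟩
        · exact .inl ⟨p, cons_mem_frontNFA_accepts.2 ⟨q', hq', hp⟩, hpv⟩
        · exact .inr ⟨z, hzy, y :: w, hzw.cons y, acceptsFrom_cons hq' hacc⟩
      · have hx : x ∈ u ++ v' := by
          have hx' : x ∈ u ++ y :: v' :=
            hw ▸ mem_append_left v (mem_replicate.2 ⟨by omega, rfl⟩)
          simpa [Ne.symm hyx] using hx'
        exact .inr ⟨y, hyx, y :: (u ++ v'), (singleton_sublist.2 hx).cons_cons y,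
          acceptsFrom_cons hq' hrun⟩
    · obtain ⟨y, v', rfl⟩ := ne_nil_iff_exists_cons.1 hv
      obtain ⟨w, hw', hyxw⟩ := hw.exists_pair_sublist (x := x) (y := y) (by simp) (by simp)
      exact .inr ⟨y, fun hyx => hxv (hyx ▸ mem_cons_self), w, hyxw,
        acceptsFrom_of_inStar hw' hend⟩

end RNFAwtw

/-- The language `L_2lin = { a^{2n} b^{2n} : n ≥ 1 }` is not accepted by any
(non-repetitive) nondeterministic finite automaton with translucent words. -/
theorem L2lin_not_accepted_by_NFAwtw : ¬ AcceptedByNFAwtw L2lin := by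
  rintro ⟨Q, _, A, hA, hL⟩
  have : Fintype Q := Fintype.ofFinite Q
  set N := 2 * Fintype.card (Set Q)
  have hN : 0 < N := by positivity
  obtain ⟨q, hq, hacc⟩ : replicate N Letter.a ++ replicate N Letter.b ∈ A.lang :=
    hL ▸ ⟨_, Fintype.card_pos, rfl⟩
  rcases RNFAwtw.AcceptsFrom.replicate_append hA (by simpa using hN.ne') (by simp) hacc with
    ⟨p, hp, hpv⟩ | ⟨y, hya, w, hw, hacc'⟩
  · obtain ⟨d, hd, hpump⟩ := (A.frontNFA q p).exists_replicate_add_mem_accepts hp (by omega)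
    obtain ⟨m, -, hm⟩ : replicate (N + d) Letter.a ++ replicate N Letter.b ∈ L2lin :=
      hL ▸ ⟨q, hq, RNFAwtw.acceptsFrom_append hpump hpv⟩
    have ha := congrArg (count Letter.a) hm
    have hb := congrArg (count Letter.b) hm
    simp only [count_append, count_replicate_self, count_replicate, beq_iff_eq, reduceCtorEq,
      ↓reduceIte, add_zero, zero_add] at ha hb
    omega
  · obtain ⟨m, -, rfl⟩ : w ∈ L2lin := hL ▸ ⟨q, hq, hacc'⟩
    exact not_pair_sublist_replicate_append_replicate hya _ _ hw
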